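/- If a voting method F satisfies positive involvement, the Condorcet winner criterion, and ordinal margin invariance, and F selects a unique winner on every profile with all margins nonzero and pairwise distinct, then for any profile P realizing the margin ordering 0 < m(d,a) < m(b,d) < m(d,c) < m(a,c) < m(c,b) < m(b,a) on {a,b,c,d} (graph M_5), F(P) = {d}. -/

import Mathlib

open scoped Classical

/-- A profile assigns to each voter in a finite nonempty set of voters a
preference relation on the alternatives. -/
structure Profile (α V : Type*) where
  voters : Finset V
  pref : V → α → α → Prop
  voters_nonempty : voters.Nonempty

/-- The number of voters strictly preferring `x` to `y` (as an integer). -/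
noncomputable def Profile.support {α V : Type*} (P : Profile α V) (x y : α) : ℤ :=
  ((P.voters.filter fun i => P.pref i x y).card : ℤ)

/-- The majority margin of `x` over `y`. -/
noncomputable def Profile.margin {α V : Type*} (P : Profile α V) (x y : α) : ℤ :=
  P.support x y - P.support y x

/-- Every voter's preference is a strict linear order. -/
def Profile.linear {α V : Type*} (P : Profile α V) : Prop :=
  ∀ i ∈ P.voters,
    (∀ x, ¬ P.pref i x x) ∧
    (∀ x y z, P.pref i x y → P.pref i y z → P.pref i x z) ∧
    (∀ x y, x ≠ y → P.pref i x y ∨ P.pref i y x)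

/-- Every voter's preference is a strict weak order. -/
def Profile.swo {α V : Type*} (P : Profile α V) : Prop :=
  ∀ i ∈ P.voters,
    (∀ x, ¬ P.pref i x x) ∧
    (∀ x y z, P.pref i x y → P.pref i y z → P.pref i x z) ∧
    (∀ x y z, (¬ P.pref i x y ∧ ¬ P.pref i y x) → (¬ P.pref i y z ∧ ¬ P.pref i z y) →
      (¬ P.pref i x z ∧ ¬ P.pref i z x))

/-- The defensible set of a profile. -/
noncomputable def Profile.defensible {α V : Type*} (P : Profile α V) : Set α :=
  {x | ∀ y, ∃ z, P.margin y x ≤ P.margin z y}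

inductive Alt : Type
  | a | b | c | d
deriving DecidableEq

open Alt

/-- Same ordinal margin graph: same positive-margin edges and same ordering of
edges by margin size. -/
noncomputable def omgEq {V W : Type*} (P : Profile Alt V) (P' : Profile Alt W) : Prop :=
  (∀ x y : Alt, 0 < P.margin x y ↔ 0 < P'.margin x y) ∧
  (∀ x y z w : Alt, 0 < P.margin x y → 0 < P.margin z w →
    (P.margin x y < P.margin z w ↔ P'.margin x y < P'.margin z w))

section Aux
variable {V : Type*}

/-- count of voters (indices) preferring u to w in list-of-orders L -/
def cnt (L : List (List Alt)) (u w : Alt) : ℕ :=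
  (List.range L.length).countP
    (fun n => decide ((L.getD n []).idxOf u < (L.getD n []).idxOf w))

noncomputable def mkP (e : ℕ ↪ V) (L : List (List Alt)) (h : L ≠ []) : Profile Alt V where
  voters := (Finset.range L.length).map e
  pref v u w := ∃ n, n < L.length ∧ e n = v ∧ (L.getD n []).idxOf u < (L.getD n []).idxOf w
  voters_nonempty := ⟨e 0, by
    simp only [Finset.mem_map, Finset.mem_range]
    exact ⟨0, List.length_pos_iff.mpr h, rfl⟩⟩

lemma mkP_pref_iff (e : ℕ ↪ V) (L : List (List Alt)) (h : L ≠ []) {n : ℕ}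
    (hn : n < L.length) (u w : Alt) :
    (mkP e L h).pref (e n) u w ↔ (L.getD n []).idxOf u < (L.getD n []).idxOf w := by
  constructor
  · rintro ⟨m, hm, hme, hlt⟩
    rwa [e.injective hme] at hlt
  · exact fun h' => ⟨n, hn, rfl, h'⟩

lemma mkP_support (e : ℕ ↪ V) (L : List (List Alt)) (h : L ≠ []) (u w : Alt) :
    (mkP e L h).support u w = (cnt L u w : ℤ) := by
  have hfilter : ((mkP e L h).voters.filter fun i => (mkP e L h).pref i u w)
      = ((Finset.range L.length).filter
          (fun n => (L.getD n []).idxOf u < (L.getD n []).idxOf w)).map e := by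
    show ((Finset.range L.length).map e).filter _ = _
    rw [Finset.filter_map]
    congr 1
    apply Finset.filter_congr
    intro n hn
    rw [Finset.mem_range] at hn
    simp only [Function.comp]
    rw [mkP_pref_iff e L h hn]
  rw [Profile.support, hfilter, Finset.card_map]
  rw [cnt]
  norm_cast
  rw [Finset.card, Finset.filter_val, ← Multiset.countP_eq_card_filter,
      Finset.range_val, Multiset.range, Multiset.coe_countP]


lemma mkP_margin (e : ℕ ↪ V) (L : List (List Alt)) (h : L ≠ []) (u w : Alt) :
    (mkP e L h).margin u w = (cnt L u w : ℤ) - (cnt L w u : ℤ) := by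
  rw [Profile.margin, mkP_support, mkP_support]

lemma margin_skew {α : Type*} (P : Profile α V) (u w : α) :
    P.margin u w = - P.margin w u := by
  simp [Profile.margin]

lemma margin_self {α : Type*} (P : Profile α V) (u : α) : P.margin u u = 0 := by
  simp [Profile.margin]

/-- a list is a strict order on Alt if indexOf is total -/
def okOrd (o : List Alt) : Prop :=
  ∀ u v : Alt, u ≠ v → (o.idxOf u < o.idxOf v ∨ o.idxOf v < o.idxOf u)

instance : Fintype Alt :=
  ⟨⟨{Alt.a, Alt.b, Alt.c, Alt.d}, by decide⟩, by intro x; cases x <;> decide⟩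

instance : DecidablePred okOrd := fun o =>
  inferInstanceAs (Decidable (∀ u v : Alt, u ≠ v → _ ∨ _))

lemma mkP_linear (e : ℕ ↪ V) (L : List (List Alt)) (h : L ≠ [])
    (hL : ∀ o ∈ L, okOrd o) : (mkP e L h).linear := by
  intro i hi
  simp only [mkP, Finset.mem_map, Finset.mem_range] at hi
  obtain ⟨n, hn, rfl⟩ := hi
  refine ⟨?_, ?_, ?_⟩
  · intro x hx
    rw [mkP_pref_iff e L h hn] at hx
    exact lt_irrefl _ hx
  · intro x y z hxy hyz
    rw [mkP_pref_iff e L h hn] at hxy hyz ⊢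
    exact lt_trans hxy hyz
  · intro x y hxy
    rw [mkP_pref_iff e L h hn, mkP_pref_iff e L h hn]
    have hmem : L.getD n [] ∈ L := by
      rw [List.getD_eq_getElem?_getD, List.getElem?_eq_getElem hn]
      exact List.getElem_mem hn
    exact hL _ hmem x y hxy

end Aux

section OMG
variable {V W : Type*}

lemma omg_of_vals (P : Profile Alt V) (Q : Profile Alt W)
    (hp1 : 0 < P.margin d a) (hp2 : P.margin d a < P.margin b d)
    (hp3 : P.margin b d < P.margin d c) (hp4 : P.margin d c < P.margin a c)
    (hp5 : P.margin a c < P.margin c b) (hp6 : P.margin c b < P.margin b a)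
    (hq1 : 0 < Q.margin d a) (hq2 : Q.margin d a < Q.margin b d)
    (hq3 : Q.margin b d < Q.margin d c) (hq4 : Q.margin d c < Q.margin a c)
    (hq5 : Q.margin a c < Q.margin c b) (hq6 : Q.margin c b < Q.margin b a) :
    omgEq P Q := by
  have e1 : P.margin a d = - P.margin d a := margin_skew P a d
  have e2 : P.margin d b = - P.margin b d := margin_skew P d b
  have e3 : P.margin c d = - P.margin d c := margin_skew P c d
  have e4 : P.margin c a = - P.margin a c := margin_skew P c a
  have e5 : P.margin b c = - P.margin c b := margin_skew P b c
  have e6 : P.margin a b = - P.margin b a := margin_skew P a b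
  have z1 : P.margin a a = 0 := margin_self P a
  have z2 : P.margin b b = 0 := margin_self P b
  have z3 : P.margin c c = 0 := margin_self P c
  have z4 : P.margin d d = 0 := margin_self P d
  have f1 : Q.margin a d = - Q.margin d a := margin_skew Q a d
  have f2 : Q.margin d b = - Q.margin b d := margin_skew Q d b
  have f3 : Q.margin c d = - Q.margin d c := margin_skew Q c d
  have f4 : Q.margin c a = - Q.margin a c := margin_skew Q c a
  have f5 : Q.margin b c = - Q.margin c b := margin_skew Q b c
  have f6 : Q.margin a b = - Q.margin b a := margin_skew Q a b
  have w1 : Q.margin a a = 0 := margin_self Q a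
  have w2 : Q.margin b b = 0 := margin_self Q b
  have w3 : Q.margin c c = 0 := margin_self Q c
  have w4 : Q.margin d d = 0 := margin_self Q d
  constructor
  · intro x y
    cases x <;> cases y <;> omega
  · intro x y z w
    cases x <;> cases y <;> cases z <;> cases w <;> omega

end OMG

section Chain
variable {V : Type*}

lemma app_ne {α : Type*} (L M : List α) (h : L ≠ []) : L ++ M ≠ [] :=
  fun hh => h (List.append_eq_nil_iff.mp hh).1

lemma mkP_congr (e : ℕ ↪ V) {L L' : List (List Alt)} (hE : L = L') (h : L ≠ []) :
    mkP e L h = mkP e L' (hE ▸ h) := by subst hE; rfl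

lemma getD_stable (L : List (List Alt)) (σ : List Alt) (j n : ℕ)
    (hn : n < (L ++ List.replicate j σ).length) :
    (L ++ List.replicate (j+1) σ).getD n [] = (L ++ List.replicate j σ).getD n [] := by
  have hE : L ++ List.replicate (j+1) σ = (L ++ List.replicate j σ) ++ [σ] := by
    rw [List.replicate_succ', ← List.append_assoc]
  rw [hE]
  exact List.getD_append _ _ _ _ hn

lemma getD_new (L : List (List Alt)) (σ : List Alt) (j : ℕ) :
    (L ++ List.replicate (j+1) σ).getD (L.length + j) [] = σ := by
  rw [List.getD_append_right _ _ _ _ (by omega)]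
  have : L.length + j - L.length = j := by omega
  rw [this, List.getD_eq_getElem?_getD, List.getElem?_replicate]
  simp

lemma ok_append (L : List (List Alt)) (σ : List Alt) (j : ℕ)
    (hLok : ∀ o ∈ L, okOrd o) (hσok : okOrd σ) :
    ∀ o ∈ L ++ List.replicate j σ, okOrd o := by
  intro o ho
  rcases List.mem_append.mp ho with h | h
  · exact hLok o h
  · rw [List.eq_of_mem_replicate h]; exact hσok

lemma chain (e : ℕ ↪ V) (F : Profile Alt V → Finset Alt)
    (hPI : ∀ (P P' : Profile Alt V) (j : V) (x : Alt), P.linear → P'.linear →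
      j ∉ P.voters → P'.voters = insert j P.voters →
      (∀ i ∈ P.voters, ∀ u v : Alt, P'.pref i u v ↔ P.pref i u v) →
      (∀ y : Alt, y ≠ x → P'.pref j x y) →
      x ∈ F P → x ∈ F P')
    (L : List (List Alt)) (σ : List Alt) (hL : L ≠ [])
    (hLok : ∀ o ∈ L, okOrd o) (hσok : okOrd σ)
    (x : Alt) (hσx : ∀ u : Alt, u ≠ x → σ.idxOf x < σ.idxOf u)
    (k : ℕ) (hx : x ∈ F (mkP e L hL)) :
    x ∈ F (mkP e (L ++ List.replicate k σ) (app_ne L _ hL)) := by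
  induction k with
  | zero =>
    rw [mkP_congr e (show L ++ List.replicate 0 σ = L from List.append_nil L)]
    exact hx
  | succ j ih =>
    set Lj := L ++ List.replicate j σ with hLj
    set Lj1 := L ++ List.replicate (j+1) σ with hLj1
    have hlenj : Lj.length = L.length + j := by simp [hLj]
    have hlenj1 : Lj1.length = (L.length + j) + 1 := by simp [hLj1]; omega
    have hnej : Lj ≠ [] := app_ne L _ hL
    have hnej1 : Lj1 ≠ [] := app_ne L _ hL
    refine hPI (mkP e Lj hnej) (mkP e Lj1 hnej1) (e (L.length + j)) x
      (mkP_linear e Lj hnej (ok_append L σ j hLok hσok))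
      (mkP_linear e Lj1 hnej1 (ok_append L σ (j+1) hLok hσok))
      ?_ ?_ ?_ ?_ ih
    · -- not a voter
      intro hmem
      simp only [mkP, Finset.mem_map, Finset.mem_range] at hmem
      obtain ⟨n, hn, hne⟩ := hmem
      rw [e.injective hne] at hn
      omega
    · -- voters insert
      show (Finset.range Lj1.length).map e = insert _ ((Finset.range Lj.length).map e)
      rw [hlenj1, hlenj, Finset.range_add_one, Finset.map_insert]
    · -- prefs agree
      intro i hi u v
      simp only [mkP, Finset.mem_map, Finset.mem_range] at hi
      obtain ⟨n, hn, rfl⟩ := hi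
      rw [mkP_pref_iff e Lj1 hnej1 (by omega), mkP_pref_iff e Lj hnej hn,
        getD_stable L σ j n hn]
    · -- ranks x uniquely first
      intro u hu
      rw [mkP_pref_iff e Lj1 hnej1 (by omega), getD_new L σ j]
      exact hσx u hu

end Chain

section Kick
variable {V : Type*}

lemma kick (e : ℕ ↪ V) (F : Profile Alt V → Finset Alt)
    (hPI : ∀ (P P' : Profile Alt V) (j : V) (x : Alt), P.linear → P'.linear →
      j ∉ P.voters → P'.voters = insert j P.voters →
      (∀ i ∈ P.voters, ∀ u v : Alt, P'.pref i u v ↔ P.pref i u v) →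
      (∀ y : Alt, y ≠ x → P'.pref j x y) →
      x ∈ F P → x ∈ F P')
    (hCW : ∀ (P : Profile Alt V) (x : Alt), P.linear →
      (∀ y : Alt, y ≠ x → 0 < P.margin x y) → F P = {x})
    (hOMI : ∀ P P' : Profile Alt V, P.linear → P'.linear → omgEq P P' → F P = F P')
    (P : Profile Alt V) (hP : P.linear)
    (hp1 : 0 < P.margin Alt.d Alt.a) (hp2 : P.margin Alt.d Alt.a < P.margin Alt.b Alt.d)
    (hp3 : P.margin Alt.b Alt.d < P.margin Alt.d Alt.c)
    (hp4 : P.margin Alt.d Alt.c < P.margin Alt.a Alt.c)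
    (hp5 : P.margin Alt.a Alt.c < P.margin Alt.c Alt.b)
    (hp6 : P.margin Alt.c Alt.b < P.margin Alt.b Alt.a)
    (L : List (List Alt)) (σ : List Alt) (k : ℕ) (x y : Alt) (hxy : x ≠ y)
    (hL : L ≠ []) (hLok : ∀ o ∈ L, okOrd o) (hσok : okOrd σ)
    (hσx : ∀ u : Alt, u ≠ x → σ.idxOf x < σ.idxOf u)
    (hq1 : 0 < (mkP e L hL).margin Alt.d Alt.a)
    (hq2 : (mkP e L hL).margin Alt.d Alt.a < (mkP e L hL).margin Alt.b Alt.d)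
    (hq3 : (mkP e L hL).margin Alt.b Alt.d < (mkP e L hL).margin Alt.d Alt.c)
    (hq4 : (mkP e L hL).margin Alt.d Alt.c < (mkP e L hL).margin Alt.a Alt.c)
    (hq5 : (mkP e L hL).margin Alt.a Alt.c < (mkP e L hL).margin Alt.c Alt.b)
    (hq6 : (mkP e L hL).margin Alt.c Alt.b < (mkP e L hL).margin Alt.b Alt.a)
    (hcw : ∀ z : Alt, z ≠ y →
      0 < (mkP e (L ++ List.replicate k σ) (app_ne L _ hL)).margin y z)
    (hx : x ∈ F P) : False := by
  have hQ0lin := mkP_linear e L hL hLok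
  have homg := omg_of_vals P (mkP e L hL) hp1 hp2 hp3 hp4 hp5 hp6 hq1 hq2 hq3 hq4 hq5 hq6
  have hFeq := hOMI P (mkP e L hL) hP hQ0lin homg
  have hx0 : x ∈ F (mkP e L hL) := hFeq ▸ hx
  have hxk := chain e F hPI L σ hL hLok hσok x hσx k hx0
  have hky := hCW (mkP e (L ++ List.replicate k σ) (app_ne L _ hL)) y
    (mkP_linear e _ _ (ok_append L σ k hLok hσok)) hcw
  rw [hky] at hxk
  exact hxy (Finset.mem_singleton.mp hxk)

end Kick

open Alt in
def blk (u v p q : Alt) : List (List Alt) := [[u,v,p,q],[q,p,u,v]]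

def blks (n : ℕ) (u v p q : Alt) : List (List Alt) := (List.replicate n (blk u v p q)).flatten

open Alt in
def La : List (List Alt) :=
  blks 1 d a b c ++ blks 2 b d a c ++ blks 3 d c a b ++ blks 4 a c b d ++
  blks 5 c b a d ++ blks 7 b a c d

open Alt in
def Lb : List (List Alt) :=
  blks 1 d a b c ++ blks 2 b d a c ++ blks 3 d c a b ++ blks 4 a c b d ++
  blks 7 c b a d ++ blks 8 b a c d

open Alt in
def Lc : List (List Alt) :=
  blks 1 d a b c ++ blks 2 b d a c ++ blks 5 d c a b ++ blks 6 a c b d ++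
  blks 7 c b a d ++ blks 8 b a c d


/-- if F satisfies positive involvement, the Condorcet winner
criterion, ordinal margin invariance, and selects a unique winner on every
profile with all margins nonzero and pairwise distinct (in absolute value),
then F selects exactly {d} on any profile realizing the margin ordering M_5. -/
theorem winner_d_on_M5 {V : Type*} [Infinite V]
    (F : Profile Alt V → Finset Alt)
    (hne : ∀ P : Profile Alt V, P.linear → (F P).Nonempty)
    -- positive involvement
    (hPI : ∀ (P P' : Profile Alt V) (j : V) (x : Alt), P.linear → P'.linear →
      j ∉ P.voters → P'.voters = insert j P.voters →
      (∀ i ∈ P.voters, ∀ u v : Alt, P'.pref i u v ↔ P.pref i u v) →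
      (∀ y : Alt, y ≠ x → P'.pref j x y) →
      x ∈ F P → x ∈ F P')
    -- Condorcet winner criterion
    (hCW : ∀ (P : Profile Alt V) (x : Alt), P.linear →
      (∀ y : Alt, y ≠ x → 0 < P.margin x y) → F P = {x})
    -- ordinal margin invariance
    (hOMI : ∀ P P' : Profile Alt V, P.linear → P'.linear → omgEq P P' → F P = F P')
    -- resolvability consequence: unique winner when margins nonzero & distinct
    (hres : ∀ P : Profile Alt V, P.linear →
      (∀ x y : Alt, x ≠ y → P.margin x y ≠ 0) →
      (∀ x y z w : Alt, x ≠ y → z ≠ w → ({x, y} : Finset Alt) ≠ {z, w} →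
        |P.margin x y| ≠ |P.margin z w|) →
      (F P).card = 1) :
    ∀ P : Profile Alt V, P.linear →
      0 < P.margin d a → P.margin d a < P.margin b d → P.margin b d < P.margin d c →
      P.margin d c < P.margin a c → P.margin a c < P.margin c b →
      P.margin c b < P.margin b a →
      F P = {d} := by
  intro P hlin h1 h2 h3 h4 h5 h6
  classical
  let e := Infinite.natEmbedding V
  have key : ∀ x ∈ F P, x = d := by
    intro x hx
    cases x with
    | d => rfl
    | a =>
      refine (kick e F hPI hCW hOMI P hlin h1 h2 h3 h4 h5 h6
        La [a,b,c,d] 12 a b (by decide) (by decide) (by decide) (by decide) (by decide)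
        ?_ ?_ ?_ ?_ ?_ ?_ ?_ hx).elim
      · rw [mkP_margin]; decide
      · rw [mkP_margin, mkP_margin]; decide
      · rw [mkP_margin, mkP_margin]; decide
      · rw [mkP_margin, mkP_margin]; decide
      · rw [mkP_margin, mkP_margin]; decide
      · rw [mkP_margin, mkP_margin]; decide
      · intro z hz
        cases z with
        | b => exact absurd rfl hz
        | a => rw [mkP_margin]; decide
        | c => rw [mkP_margin]; decide
        | d => rw [mkP_margin]; decide
    | b =>
      refine (kick e F hPI hCW hOMI P hlin h1 h2 h3 h4 h5 h6
        Lb [b,c,a,d] 10 b c (by decide) (by decide) (by decide) (by decide) (by decide)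
        ?_ ?_ ?_ ?_ ?_ ?_ ?_ hx).elim
      · rw [mkP_margin]; decide
      · rw [mkP_margin, mkP_margin]; decide
      · rw [mkP_margin, mkP_margin]; decide
      · rw [mkP_margin, mkP_margin]; decide
      · rw [mkP_margin, mkP_margin]; decide
      · rw [mkP_margin, mkP_margin]; decide
      · intro z hz
        cases z with
        | c => exact absurd rfl hz
        | a => rw [mkP_margin]; decide
        | b => rw [mkP_margin]; decide
        | d => rw [mkP_margin]; decide
    | c =>
      refine (kick e F hPI hCW hOMI P hlin h1 h2 h3 h4 h5 h6
        Lc [c,d,a,b] 6 c d (by decide) (by decide) (by decide) (by decide) (by decide)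
        ?_ ?_ ?_ ?_ ?_ ?_ ?_ hx).elim
      · rw [mkP_margin]; decide
      · rw [mkP_margin, mkP_margin]; decide
      · rw [mkP_margin, mkP_margin]; decide
      · rw [mkP_margin, mkP_margin]; decide
      · rw [mkP_margin, mkP_margin]; decide
      · rw [mkP_margin, mkP_margin]; decide
      · intro z hz
        cases z with
        | d => exact absurd rfl hz
        | a => rw [mkP_margin]; decide
        | b => rw [mkP_margin]; decide
        | c => rw [mkP_margin]; decide
  obtain ⟨w, hw⟩ := hne P hlin
  have hwd := key w hw
  rw [Finset.eq_singleton_iff_unique_mem]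
  exact ⟨hwd ▸ hw, key⟩
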